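/- arXiv:0903.4730 — 4 statements merged into one kernel-verified Lean document; each statement's English description precedes it below -/
import Mathlib

section
/- Let T be a tree on vertex set {1,...,n} and let (X(i), 0 ≤ i < n) be the depth-first walk of T, defined by X(i) = |O_i| - 1 where O_i is the stack of open vertices at step i of the ordered depth-first search of T. Then the number of non-tree edges uv permitted by the ordered DFS (i.e., pairs u,v both contained in the stack O_i for some i) equals the area a(T) = Σ_{i=1}^{n-1} X(i). -/
open scoped Classical
noncomputable section

namespace RandomGraphs

variable {n : ℕ}

/-- One step of ordered depth-first search (oDFS): the state is the pair
(stack of open vertices, set of explored vertices). The first vertex of the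
stack is explored: it is removed and its unseen neighbors are prepended to the
stack in increasing order. -/
def dfsStep (G : SimpleGraph (Fin n)) :
    List (Fin n) × Finset (Fin n) → List (Fin n) × Finset (Fin n) :=
  fun st =>
    match st with
    | ([], A) => ([], A)
    | (v :: rest, A) =>
        (((G.neighborFinset v).filter
            (fun w => w ∉ A ∧ w ∉ (v :: rest))).sort (· ≤ ·) ++ rest,
          insert v A)

/-- The oDFS state at time `i`, started from the stack containing only vertex `0`
(the vertex with smallest label). -/
def dfsState (G : SimpleGraph (Fin n)) (i : ℕ) :
    List (Fin n) × Finset (Fin n) :=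
  (dfsStep G)^[i] ((List.finRange n).take 1, ∅)

/-- The stack `O_i` of open vertices at time `i`. -/
def stackAt (G : SimpleGraph (Fin n)) (i : ℕ) : List (Fin n) :=
  (dfsState G i).1

/-- The depth-first walk `X(i) = |O_i| - 1` of a connected graph. -/
def dfw (G : SimpleGraph (Fin n)) (i : ℕ) : ℕ :=
  (stackAt G i).length - 1

/-- The area `a(T) = Σ_{i=1}^{n-1} X(i)` of a tree. -/
def area (G : SimpleGraph (Fin n)) : ℕ :=
  ∑ i ∈ Finset.Ico 1 n, dfw G i

/-- The set of (unordered) edges permitted by oDFS run on `T`: non-edges `uv`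
of `T` such that both `u` and `v` lie in the stack `O_i` for some `i < n`. -/
def permittedSet (T : SimpleGraph (Fin n)) : Set (Sym2 (Fin n)) :=
  {e | ∃ u v : Fin n, e = s(u, v) ∧ u ≠ v ∧ ¬ T.Adj u v ∧
    ∃ i < n, u ∈ stackAt T i ∧ v ∈ stackAt T i}

end RandomGraphs

/-!
Exploring the head `v` of `O_i` pairs it with the `X(i)` vertices below it. A pair `{u, w}` of
open vertices is produced exactly once, at the first step that pops one of them, because a
popped vertex never returns to the stack; and the stack is empty by time `n`. In a tree no two
open vertices are adjacent: each is joined to the root through explored vertices, so an edge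
between them would not be a bridge.
-/

namespace List

variable {α : Type*} [DecidableEq α]

def headPairs : List α → Finset (Sym2 α)
  | [] => ∅
  | v :: rest => rest.toFinset.image fun w => s(v, w)

@[simp]
lemma headPairs_nil : headPairs ([] : List α) = ∅ := rfl

@[simp]
lemma mem_headPairs_cons {v : α} {rest : List α} {e : Sym2 α} :
    e ∈ headPairs (v :: rest) ↔ ∃ w ∈ rest, s(v, w) = e := by
  simp [headPairs]

lemma mem_of_mem_headPairs {l : List α} {e : Sym2 α} {x : α} (he : e ∈ l.headPairs)
    (hx : x ∈ e) : x ∈ l := by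
  cases l with
  | nil => simp at he
  | cons v rest =>
    obtain ⟨w, hw, rfl⟩ := mem_headPairs_cons.mp he
    rcases Sym2.mem_iff.mp hx with rfl | rfl
    · exact mem_cons_self
    · exact mem_cons_of_mem _ hw

lemma card_headPairs {l : List α} (hl : l.Nodup) : l.headPairs.card = l.length - 1 := by
  cases l with
  | nil => rfl
  | cons v rest =>
    rw [headPairs, Finset.card_image_of_injective _ fun _ _ h => Sym2.congr_right.mp h,
      toFinset_card_of_nodup (nodup_cons.mp hl).2, length_cons, Nat.add_sub_cancel]

end List

namespace SimpleGraph.Walk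

variable {V : Type*} {G : SimpleGraph V}

lemma exists_mem_support_tail_of_mem_edges {u v : V} {p : G.Walk u v} {e : Sym2 V}
    (he : e ∈ p.edges) : ∃ x ∈ p.support.tail, x ∈ e := by
  obtain ⟨d, hd, rfl⟩ := List.mem_map.mp he
  exact ⟨d.snd, p.map_snd_darts ▸ List.mem_map_of_mem hd, Sym2.mem_mk_right _ _⟩

end SimpleGraph.Walk

namespace RandomGraphs

open SimpleGraph

variable {n : ℕ} (G : SimpleGraph (Fin n))

def explored (i : ℕ) : Finset (Fin n) := (dfsState G i).2

def pushed (v : Fin n) (rest : List (Fin n)) (A : Finset (Fin n)) : List (Fin n) :=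
  ((G.neighborFinset v).filter fun w => w ∉ A ∧ w ∉ v :: rest).sort (· ≤ ·)

variable {G}

lemma mem_pushed {v w : Fin n} {rest : List (Fin n)} {A : Finset (Fin n)} :
    w ∈ pushed G v rest A ↔ G.Adj v w ∧ w ∉ A ∧ w ≠ v ∧ w ∉ rest := by
  simp [pushed]

lemma dfsState_eq (i : ℕ) : dfsState G i = (stackAt G i, explored G i) := rfl

lemma dfsState_succ (i : ℕ) : dfsState G (i + 1) = dfsStep G (dfsState G i) :=
  Function.iterate_succ_apply' _ _ _

lemma dfsState_succ_of_stackAt_eq_nil {i : ℕ} (h : stackAt G i = []) :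
    dfsState G (i + 1) = dfsState G i := by
  rw [dfsState_succ, dfsState_eq i, h]
  rfl

lemma stackAt_succ_of_eq_nil {i : ℕ} (h : stackAt G i = []) : stackAt G (i + 1) = [] := by
  rw [stackAt, dfsState_succ_of_stackAt_eq_nil h]
  exact h

lemma dfsState_succ_of_stackAt_eq_cons {i : ℕ} {v : Fin n} {rest : List (Fin n)}
    (h : stackAt G i = v :: rest) :
    dfsState G (i + 1) = (pushed G v rest (explored G i) ++ rest, insert v (explored G i)) := by
  rw [dfsState_succ, dfsState_eq i, h]
  rfl

lemma stackAt_succ_of_eq_cons {i : ℕ} {v : Fin n} {rest : List (Fin n)}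
    (h : stackAt G i = v :: rest) :
    stackAt G (i + 1) = pushed G v rest (explored G i) ++ rest := by
  rw [stackAt, dfsState_succ_of_stackAt_eq_cons h]

lemma explored_succ_of_stackAt_eq_cons {i : ℕ} {v : Fin n} {rest : List (Fin n)}
    (h : stackAt G i = v :: rest) : explored G (i + 1) = insert v (explored G i) := by
  rw [explored, dfsState_succ_of_stackAt_eq_cons h]

lemma explored_zero : explored G 0 = ∅ := rfl

lemma eq_of_mem_stackAt_zero {r r' : Fin n} (hr : r ∈ stackAt G 0) (hr' : r' ∈ stackAt G 0) :
    r = r' := by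
  simp only [stackAt, dfsState, Function.iterate_zero, id, List.take_one,
    Option.mem_toList] at hr hr'
  exact Option.some_injective _ (hr.symm.trans hr')

lemma length_stackAt_zero_le : (stackAt G 0).length ≤ 1 :=
  List.length_take_le _ _

lemma explored_mono : Monotone (explored G) := by
  refine monotone_nat_of_le_succ fun i => ?_
  rcases h : stackAt G i with _ | ⟨v, rest⟩
  · exact (congrArg Prod.snd (dfsState_succ_of_stackAt_eq_nil h)).ge
  · rw [explored_succ_of_stackAt_eq_cons h]
    exact Finset.subset_insert _ _

variable (G) in
structure DfsInvariant (i : ℕ) : Prop where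
  nodup : (stackAt G i).Nodup
  not_mem_explored : ∀ w ∈ stackAt G i, w ∉ explored G i
  -- `stackAt G 0` is the root `[0]`, or `[]` when `n = 0`
  exists_walk : ∀ w ∈ stackAt G i, ∃ r ∈ stackAt G 0, ∃ p : G.Walk w r,
    ∀ x ∈ p.support.tail, x ∈ explored G i

lemma DfsInvariant.succ {i : ℕ} (h : DfsInvariant G i) : DfsInvariant G (i + 1) := by
  rcases hs : stackAt G i with _ | ⟨v, rest⟩
  · have hs' := stackAt_succ_of_eq_nil hs
    exact ⟨by simp [hs'], by simp [hs'], by simp [hs']⟩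
  have hnodup := h.nodup
  rw [hs, List.nodup_cons] at hnodup
  have hexp := explored_succ_of_stackAt_eq_cons hs
  have hold : ∀ w ∈ rest, w ∈ stackAt G i := fun w hw => hs ▸ List.mem_cons_of_mem _ hw
  refine ⟨?_, ?_, ?_⟩ <;> rw [stackAt_succ_of_eq_cons hs]
  · exact (Finset.sort_nodup _ _).append hnodup.2 fun _ hw => (mem_pushed.mp hw).2.2.2
  · intro w hw
    rw [hexp, Finset.mem_insert, not_or]
    rcases List.mem_append.mp hw with hw | hw
    · exact ⟨(mem_pushed.mp hw).2.2.1, (mem_pushed.mp hw).2.1⟩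
    · exact ⟨fun h' => hnodup.1 (h' ▸ hw), h.not_mem_explored w (hold w hw)⟩
  · intro w hw
    rcases List.mem_append.mp hw with hw | hw
    · obtain ⟨r, hr, p, hp⟩ := h.exists_walk v (hs ▸ List.mem_cons_self)
      refine ⟨r, hr, .cons (mem_pushed.mp hw).1.symm p, fun x hx => ?_⟩
      rw [Walk.support_cons, List.tail_cons, ← p.cons_tail_support, List.mem_cons] at hx
      rw [hexp]
      rcases hx with rfl | hx
      · exact Finset.mem_insert_self _ _
      · exact Finset.mem_insert_of_mem (hp x hx)
    · obtain ⟨r, hr, p, hp⟩ := h.exists_walk w (hold w hw)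
      exact ⟨r, hr, p, fun x hx => explored_mono (Nat.le_succ i) (hp x hx)⟩

variable (G) in
lemma dfsInvariant (i : ℕ) : DfsInvariant G i := by
  induction i with
  | zero =>
    exact ⟨(List.nodup_finRange n).sublist (List.take_sublist _ _), by simp [explored_zero],
      fun w hw => ⟨w, hw, .nil, by simp⟩⟩
  | succ i ih => exact ih.succ

lemma card_explored_of_stackAt_ne_nil {i : ℕ} (h : stackAt G i ≠ []) :
    (explored G i).card = i := by
  induction i with
  | zero => rfl
  | succ i ih =>
    rcases hs : stackAt G i with _ | ⟨v, rest⟩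
    · exact absurd (stackAt_succ_of_eq_nil hs) h
    · rw [explored_succ_of_stackAt_eq_cons hs, Finset.card_insert_of_notMem
        ((dfsInvariant G i).not_mem_explored v (hs ▸ List.mem_cons_self)), ih (by simp [hs])]

lemma stackAt_eq_nil_of_le {i : ℕ} (hi : n ≤ i) : stackAt G i = [] := by
  by_contra h
  obtain ⟨w, hw⟩ := List.exists_mem_of_ne_nil _ h
  have huniv : explored G i = Finset.univ := Finset.eq_univ_of_card _ <|
    le_antisymm (Finset.card_le_univ _)
      (by rw [Fintype.card_fin, card_explored_of_stackAt_ne_nil h]; exact hi)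
  exact (dfsInvariant G i).not_mem_explored w hw (huniv ▸ Finset.mem_univ w)

lemma exists_lt_mem_headPairs {u v : Fin n} (huv : u ≠ v) {i : ℕ} (hu : u ∈ stackAt G i)
    (hv : v ∈ stackAt G i) : ∃ j < n, s(u, v) ∈ (stackAt G j).headPairs := by
  induction hk : n - i generalizing i with
  | zero => simp [stackAt_eq_nil_of_le (show n ≤ i by omega)] at hu
  | succ k ih =>
    rcases hs : stackAt G i with _ | ⟨w, rest⟩
    · simp [hs] at hu
    rw [hs] at hu hv
    have hi : i < n := by omega
    rcases List.mem_cons.mp hu with rfl | hu' <;> rcases List.mem_cons.mp hv with rfl | hv'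
    · exact absurd rfl huv
    · exact ⟨i, hi, hs ▸ List.mem_headPairs_cons.mpr ⟨v, hv', rfl⟩⟩
    · exact ⟨i, hi, hs ▸ List.mem_headPairs_cons.mpr ⟨u, hu', Sym2.eq_swap⟩⟩
    · have hnext : ∀ x ∈ rest, x ∈ stackAt G (i + 1) := fun x hx =>
        stackAt_succ_of_eq_cons hs ▸ List.mem_append_right _ hx
      exact ih (hnext u hu') (hnext v hv') (by omega)

lemma disjoint_headPairs {i j : ℕ} (hij : i < j) :
    Disjoint (stackAt G i).headPairs (stackAt G j).headPairs := by
  rcases hs : stackAt G i with _ | ⟨v, rest⟩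
  · exact Finset.disjoint_empty_left _
  have hv : v ∈ explored G j := explored_mono hij <| by
    rw [explored_succ_of_stackAt_eq_cons hs]
    exact Finset.mem_insert_self _ _
  refine Finset.disjoint_left.mpr fun e he he' => ?_
  obtain ⟨w, -, rfl⟩ := List.mem_headPairs_cons.mp he
  exact (dfsInvariant G j).not_mem_explored v
    (List.mem_of_mem_headPairs he' (Sym2.mem_mk_left v w)) hv

lemma not_adj_of_mem_stackAt (hG : G.IsAcyclic) {i : ℕ} {u v : Fin n} (hu : u ∈ stackAt G i)
    (hv : v ∈ stackAt G i) : ¬ G.Adj u v := by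
  intro hadj
  obtain ⟨r, hr, p, hp⟩ := (dfsInvariant G i).exists_walk u hu
  obtain ⟨r', hr', q, hq⟩ := (dfsInvariant G i).exists_walk v hv
  obtain rfl := eq_of_mem_stackAt_zero hr hr'
  have hbridge := isBridge_iff_forall_walk_mem_edges.mp
    (isAcyclic_iff_forall_adj_isBridge.mp hG hadj) (p.append q.reverse)
  have hopen : ∀ x ∈ s(u, v), x ∉ explored G i := by
    rintro x hx
    rcases Sym2.mem_iff.mp hx with rfl | rfl
    exacts [(dfsInvariant G i).not_mem_explored x hu, (dfsInvariant G i).not_mem_explored x hv]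
  rw [Walk.edges_append, Walk.edges_reverse, List.mem_append, List.mem_reverse] at hbridge
  rcases hbridge with he | he
  · obtain ⟨x, hx, hxe⟩ := Walk.exists_mem_support_tail_of_mem_edges he
    exact hopen x hxe (hp x hx)
  · obtain ⟨x, hx, hxe⟩ := Walk.exists_mem_support_tail_of_mem_edges he
    exact hopen x hxe (hq x hx)

lemma permittedSet_eq_biUnion_headPairs (hG : G.IsAcyclic) :
    permittedSet G = ↑((Finset.range n).biUnion fun i => (stackAt G i).headPairs) := by
  ext e
  simp only [Finset.coe_biUnion, Finset.coe_range, Set.mem_Iio, Set.mem_iUnion, Finset.mem_coe]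
  constructor
  · rintro ⟨u, v, rfl, huv, -, i, -, hu, hv⟩
    obtain ⟨j, hj, he⟩ := exists_lt_mem_headPairs huv hu hv
    exact ⟨j, hj, he⟩
  · rintro ⟨j, hj, he⟩
    rcases hs : stackAt G j with _ | ⟨v, rest⟩
    · simp [hs] at he
    rw [hs] at he
    obtain ⟨w, hw, rfl⟩ := List.mem_headPairs_cons.mp he
    have hnodup := (dfsInvariant G j).nodup
    rw [hs, List.nodup_cons] at hnodup
    have hv : v ∈ stackAt G j := hs ▸ List.mem_cons_self
    have hw' : w ∈ stackAt G j := hs ▸ List.mem_cons_of_mem _ hw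
    exact ⟨v, w, rfl, fun h => hnodup.1 (h ▸ hw), not_adj_of_mem_stackAt hG hv hw',
      j, hj, hv, hw'⟩

lemma area_eq_sum_range : area G = ∑ i ∈ Finset.range n, dfw G i := by
  cases n with
  | zero => rfl
  | succ m =>
    rw [Finset.range_eq_Ico, Finset.sum_eq_sum_Ico_succ_bot (Nat.succ_pos m), area,
      dfw, Nat.sub_eq_zero_of_le length_stackAt_zero_le, zero_add]

end RandomGraphs

open RandomGraphs in
/-- For a tree `T` on `[n]`, the number of non-tree edges
permitted by the ordered depth-first search of `T` equals the area
`a(T) = Σ_{i=1}^{n-1} X(i)` of `T`, where `X` is the depth-first walk. -/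
theorem card_permitted_eq_area (n : ℕ) (T : SimpleGraph (Fin n))
    (hT : T.IsTree) :
    (permittedSet T).ncard = area T := by
  have hdisj : Set.PairwiseDisjoint ↑(Finset.range n) fun i => (stackAt T i).headPairs :=
    ((pairwise_disjoint_on _).mpr fun _ _ hij => disjoint_headPairs hij).set_pairwise _
  rw [permittedSet_eq_biUnion_headPairs hT.isAcyclic, Set.ncard_coe_finset,
    Finset.card_biUnion hdisj, area_eq_sum_range]
  exact Finset.sum_congr rfl fun i _ => List.card_headPairs (dfsInvariant T i).nodup
end
end

section
/- Let T be a tree on [n] and G a connected graph on [n]. Then the depth-first tree T(G) produced by ordered DFS on G equals T if and only if G can be obtained from T by adding some subset of the edges permitted by the ordered DFS of T. -/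
/-!
Ordered DFS on `G ≥ T` makes the same moves as on `T` as long as, at every step, each unseen
`G`-neighbour of the vertex being explored is a `T`-neighbour; when this holds throughout,
`T(G) = T(T) = T`, the depth-first tree of a tree being the tree itself. It fails exactly at a
non-tree edge `vw` of `G` such that `w` is still unseen when `v` is explored. A vertex stays open
from its discovery until it is explored, so `w` having been seen by then (and not yet explored)
means that `v` and `w` are open at a common time, i.e. that `vw` is permitted by `oDFS(T)`.
-/

open scoped Classical
noncomputable section

namespace RandomGraphs

variable {n : ℕ}

/-- The set of neighbors of the currently explored vertex which have not been
seen before (these become new open vertices, and the corresponding edges are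
the tree edges discovered at time `i`). -/
def newNbrs (G : SimpleGraph (Fin n)) (i : ℕ) : Finset (Fin n) :=
  match dfsState G i with
  | ([], _) => ∅
  | (v :: rest, A) => (G.neighborFinset v).filter (fun w => w ∉ A ∧ w ∉ (v :: rest))

/-- The depth-first tree `T(G)` of a connected graph `G`: its edges join
the vertex explored at step `i` to each of its previously-unseen neighbors. -/
def dfTree (G : SimpleGraph (Fin n)) : SimpleGraph (Fin n) :=
  SimpleGraph.fromRel (fun u v =>
    ∃ i < n, (stackAt G i).head? = some u ∧ v ∈ newNbrs G i)

def exploredAt (G : SimpleGraph (Fin n)) (i : ℕ) : Finset (Fin n) :=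
  (dfsState G i).2

def seenAt (G : SimpleGraph (Fin n)) (i : ℕ) : Finset (Fin n) :=
  exploredAt G i ∪ (stackAt G i).toFinset

variable {G H : SimpleGraph (Fin n)} {i j : ℕ} {u v w : Fin n} {rest : List (Fin n)}

@[simp]
lemma exploredAt_zero : exploredAt G 0 = ∅ := rfl

lemma stackAt_zero (hn : 0 < n) : stackAt G 0 = [⟨0, hn⟩] := by
  obtain ⟨m, rfl⟩ := Nat.exists_eq_succ_of_ne_zero hn.ne'
  show (List.finRange (m + 1)).take 1 = _
  rw [List.finRange_succ]
  rfl

lemma mem_seenAt : v ∈ seenAt G i ↔ v ∈ exploredAt G i ∨ v ∈ stackAt G i := by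
  simp [seenAt]

lemma dfsState_succ_of_nil (h : stackAt G i = []) : dfsState G (i + 1) = dfsState G i := by
  rw [dfsState, Function.iterate_succ_apply', ← dfsState,
    show dfsState G i = ([], exploredAt G i) from Prod.ext h rfl]
  rfl

lemma dfsState_succ_of_cons (h : stackAt G i = v :: rest) :
    dfsState G (i + 1) = ((newNbrs G i).sort (· ≤ ·) ++ rest, insert v (exploredAt G i)) := by
  rw [dfsState, Function.iterate_succ_apply', ← dfsState, newNbrs,
    show dfsState G i = (v :: rest, exploredAt G i) from Prod.ext h rfl]
  rfl

lemma newNbrs_of_nil (h : stackAt G i = []) : newNbrs G i = ∅ := by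
  rw [newNbrs, show dfsState G i = ([], exploredAt G i) from Prod.ext h rfl]

lemma mem_newNbrs_iff (h : stackAt G i = v :: rest) :
    w ∈ newNbrs G i ↔ G.Adj v w ∧ w ∉ seenAt G i := by
  rw [newNbrs, show dfsState G i = (v :: rest, exploredAt G i) from Prod.ext h rfl]
  simp [mem_seenAt, h]

lemma stackAt_succ_of_nil (h : stackAt G i = []) : stackAt G (i + 1) = [] :=
  (congrArg Prod.fst (dfsState_succ_of_nil h)).trans h

lemma stackAt_succ_of_cons (h : stackAt G i = v :: rest) :
    stackAt G (i + 1) = (newNbrs G i).sort (· ≤ ·) ++ rest :=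
  congrArg Prod.fst (dfsState_succ_of_cons h)

lemma exploredAt_succ_of_cons (h : stackAt G i = v :: rest) :
    exploredAt G (i + 1) = insert v (exploredAt G i) :=
  congrArg Prod.snd (dfsState_succ_of_cons h)

lemma seenAt_succ (G : SimpleGraph (Fin n)) (i : ℕ) :
    seenAt G (i + 1) = seenAt G i ∪ newNbrs G i := by
  rcases h : stackAt G i with _ | ⟨v, rest⟩
  · simp only [newNbrs_of_nil h, Finset.union_empty, seenAt, stackAt, exploredAt,
      dfsState_succ_of_nil h]
  · ext w
    simp only [Finset.mem_union, mem_seenAt, stackAt_succ_of_cons h, exploredAt_succ_of_cons h,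
      h, List.mem_append, Finset.mem_sort, Finset.mem_insert, List.mem_cons]
    tauto

lemma mem_exploredAt_succ :
    v ∈ exploredAt G (i + 1) ↔ v ∈ exploredAt G i ∨ (stackAt G i).head? = some v := by
  rcases h : stackAt G i with _ | ⟨u, rest⟩
  · simp [exploredAt, dfsState_succ_of_nil h]
  · rw [exploredAt_succ_of_cons h, Finset.mem_insert, List.head?_cons, Option.some.injEq, eq_comm]
    exact or_comm

lemma seenAt_mono (G : SimpleGraph (Fin n)) : Monotone (seenAt G) :=
  monotone_nat_of_le_succ fun i => (seenAt_succ G i).symm ▸ Finset.subset_union_left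

lemma exploredAt_mono (G : SimpleGraph (Fin n)) : Monotone (exploredAt G) :=
  monotone_nat_of_le_succ fun _ _ hv => mem_exploredAt_succ.2 (Or.inl hv)

lemma stackAt_nodup_and_disjoint (G : SimpleGraph (Fin n)) (i : ℕ) :
    (stackAt G i).Nodup ∧ ∀ v ∈ stackAt G i, v ∉ exploredAt G i := by
  induction i with
  | zero =>
    exact ⟨(List.take_sublist _ _).nodup (List.nodup_finRange n), by simp⟩
  | succ i ih =>
    rcases h : stackAt G i with _ | ⟨v, rest⟩
    · simp [stackAt_succ_of_nil h]
    · rw [h] at ih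
      obtain ⟨hnodup, hdisj⟩ := ih
      obtain ⟨hv, hrest⟩ := List.nodup_cons.1 hnodup
      have hnew : ∀ w ∈ newNbrs G i, w ≠ v ∧ w ∉ rest ∧ w ∉ exploredAt G i := by
        intro w hw
        have hw := ((mem_newNbrs_iff h).1 hw).2
        simp only [mem_seenAt, h, List.mem_cons, not_or] at hw
        exact ⟨hw.2.1, hw.2.2, hw.1⟩
      rw [stackAt_succ_of_cons h, exploredAt_succ_of_cons h, List.nodup_append]
      refine ⟨⟨Finset.sort_nodup _ _, hrest, ?_⟩, ?_⟩
      · rintro w hw _ hw' rfl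
        exact (hnew w ((Finset.mem_sort _).1 hw)).2.1 hw'
      · intro w hw
        rw [Finset.mem_insert, not_or]
        rcases List.mem_append.1 hw with hw | hw
        · obtain ⟨hwv, -, hwE⟩ := hnew w ((Finset.mem_sort _).1 hw)
          exact ⟨hwv, hwE⟩
        · exact ⟨fun hwv => hv (hwv ▸ hw), hdisj w (List.mem_cons_of_mem v hw)⟩

lemma notMem_exploredAt_of_mem_stackAt (h : v ∈ stackAt G i) : v ∉ exploredAt G i :=
  (stackAt_nodup_and_disjoint G i).2 v h

lemma exists_lt_head_of_mem_exploredAt (h : v ∈ exploredAt G i) :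
    ∃ j < i, (stackAt G j).head? = some v := by
  induction i with
  | zero => simp at h
  | succ i ih =>
    rcases mem_exploredAt_succ.1 h with h | h
    · obtain ⟨j, hj, hjv⟩ := ih h
      exact ⟨j, hj.trans i.lt_succ_self, hjv⟩
    · exact ⟨i, i.lt_succ_self, h⟩

lemma notMem_exploredAt_of_head (h : (stackAt G j).head? = some v) (hij : i ≤ j) :
    v ∉ exploredAt G i :=
  fun hv => notMem_exploredAt_of_mem_stackAt (List.mem_of_mem_head? h) (exploredAt_mono G hij hv)

lemma mem_exploredAt_of_head (h : (stackAt G i).head? = some v) (hij : i < j) :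
    v ∈ exploredAt G j :=
  exploredAt_mono G hij (mem_exploredAt_succ.2 (Or.inr h))

lemma card_exploredAt_succ_of_cons (h : stackAt G i = v :: rest) :
    (exploredAt G (i + 1)).card = (exploredAt G i).card + 1 := by
  rw [exploredAt_succ_of_cons h,
    Finset.card_insert_of_notMem (notMem_exploredAt_of_mem_stackAt (by simp [h]))]

lemma card_exploredAt (h : stackAt G i ≠ []) : (exploredAt G i).card = i := by
  induction i with
  | zero => simp
  | succ i ih =>
    have hi : stackAt G i ≠ [] := fun hi => h (stackAt_succ_of_nil hi)
    obtain ⟨v, rest, hs⟩ := List.exists_cons_of_ne_nil hi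
    rw [card_exploredAt_succ_of_cons hs, ih hi]

lemma lt_of_stackAt_ne_nil (h : stackAt G i ≠ []) : i < n := by
  obtain ⟨v, rest, hs⟩ := List.exists_cons_of_ne_nil h
  have hcard := Finset.card_le_univ (exploredAt G (i + 1))
  rw [card_exploredAt_succ_of_cons hs, card_exploredAt h, Fintype.card_fin] at hcard
  omega

lemma stackAt_eq_nil (G : SimpleGraph (Fin n)) : stackAt G n = [] := by
  by_contra h
  exact (lt_of_stackAt_ne_nil h).false

lemma mem_seenAt_succ_of_adj (h : stackAt G i = v :: rest) (hadj : G.Adj v w) :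
    w ∈ seenAt G (i + 1) := by
  rw [seenAt_succ, Finset.mem_union, or_iff_not_imp_left]
  exact fun hw => (mem_newNbrs_iff h).2 ⟨hadj, hw⟩

lemma exploredAt_eq_univ (hG : G.Connected) : exploredAt G n = Finset.univ := by
  have hn : 0 < n := Fin.pos_iff_nonempty.2 hG.nonempty
  have hseen : seenAt G n = exploredAt G n := by simp [seenAt, stackAt_eq_nil]
  have h0 : ⟨0, hn⟩ ∈ exploredAt G n :=
    hseen ▸ seenAt_mono G (Nat.zero_le n) (by simp [mem_seenAt, stackAt_zero hn])
  have hclosed : ∀ a w, G.Adj a w → a ∈ exploredAt G n → w ∈ exploredAt G n := by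
    intro a w haw ha
    obtain ⟨j, hj, hja⟩ := exists_lt_head_of_mem_exploredAt ha
    obtain ⟨rest, hs⟩ := List.head?_eq_some_iff.1 hja
    exact hseen ▸ seenAt_mono G hj (mem_seenAt_succ_of_adj hs haw)
  refine Finset.eq_univ_of_forall fun v => ?_
  have hreach := (SimpleGraph.reachable_iff_reflTransGen _ _).1 (hG.preconnected ⟨0, hn⟩ v)
  induction hreach with
  | refl => exact h0
  | tail _ hadj ih => exact hclosed _ _ hadj ih

lemma exists_stackAt_head_eq (hG : G.Connected) (v : Fin n) :
    ∃ i < n, (stackAt G i).head? = some v :=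
  exists_lt_head_of_mem_exploredAt (exploredAt_eq_univ hG ▸ Finset.mem_univ v)

lemma adj_of_mem_newNbrs (h : (stackAt G i).head? = some v) (hw : w ∈ newNbrs G i) :
    G.Adj v w := by
  obtain ⟨rest, hs⟩ := List.head?_eq_some_iff.1 h
  exact ((mem_newNbrs_iff hs).1 hw).1

lemma dfTree_le (G : SimpleGraph (Fin n)) : dfTree G ≤ G := by
  rintro u v ⟨-, ⟨i, -, hu, hv⟩ | ⟨i, -, hv, hu⟩⟩
  · exact adj_of_mem_newNbrs hu hv
  · exact (adj_of_mem_newNbrs hv hu).symm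

lemma dfTree_adj_of_mem_newNbrs (h : stackAt G i = v :: rest) (hw : w ∈ newNbrs G i) :
    (dfTree G).Adj v w :=
  have hv : (stackAt G i).head? = some v := by simp [h]
  ⟨(adj_of_mem_newNbrs hv hw).ne,
    Or.inl ⟨i, lt_of_stackAt_ne_nil (G := G) (by simp [h]), hv, hw⟩⟩

lemma dfTree_connected (hG : G.Connected) : (dfTree G).Connected := by
  have hn : 0 < n := Fin.pos_iff_nonempty.2 hG.nonempty
  have hreach : ∀ i, ∀ v ∈ seenAt G i, (dfTree G).Reachable ⟨0, hn⟩ v := by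
    intro i
    induction i with
    | zero => simp [mem_seenAt, stackAt_zero hn]
    | succ i ih =>
      intro v hv
      rcases Finset.mem_union.1 (seenAt_succ G i ▸ hv) with hv | hv
      · exact ih v hv
      · have hne : stackAt G i ≠ [] := fun h => Finset.notMem_empty v (newNbrs_of_nil h ▸ hv)
        obtain ⟨u, rest, hs⟩ := List.exists_cons_of_ne_nil hne
        exact (ih u (mem_seenAt.2 (Or.inr (by simp [hs])))).trans
          (dfTree_adj_of_mem_newNbrs hs hv).reachable
  have hall : ∀ v, (dfTree G).Reachable ⟨0, hn⟩ v := fun v =>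
    hreach n v (mem_seenAt.2 (Or.inl (exploredAt_eq_univ hG ▸ Finset.mem_univ v)))
  exact (SimpleGraph.connected_iff _).2 ⟨fun u v => (hall u).symm.trans (hall v), hG.nonempty⟩

lemma dfTree_eq_self {T : SimpleGraph (Fin n)} (hT : T.IsTree) : dfTree T = T :=
  le_antisymm (dfTree_le T)
    ((SimpleGraph.isTree_iff_minimal_connected.1 hT).2 (dfTree_connected hT.connected)
      (dfTree_le T))

lemma stackAt_eq_of_dfsState_eq (h : dfsState G i = dfsState H i) : stackAt G i = stackAt H i :=
  congrArg Prod.fst h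

lemma seenAt_eq_of_dfsState_eq (h : dfsState G i = dfsState H i) : seenAt G i = seenAt H i := by
  simp only [seenAt, exploredAt, stackAt, h]

lemma newNbrs_eq_of_le (hle : H ≤ G) (hs : dfsState G i = dfsState H i)
    (h : ∀ {v rest w}, stackAt G i = v :: rest → w ∈ newNbrs G i → H.Adj v w) :
    newNbrs G i = newNbrs H i := by
  have hstack := stackAt_eq_of_dfsState_eq hs
  rcases hsG : stackAt G i with _ | ⟨v, rest⟩
  · rw [newNbrs_of_nil hsG, newNbrs_of_nil (hstack ▸ hsG)]
  · ext w
    rw [mem_newNbrs_iff hsG, mem_newNbrs_iff (hstack ▸ hsG), seenAt_eq_of_dfsState_eq hs]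
    refine ⟨fun ⟨hadj, hw⟩ => ⟨h hsG ?_, hw⟩, fun ⟨hadj, hw⟩ => ⟨hle hadj, hw⟩⟩
    rw [mem_newNbrs_iff hsG, seenAt_eq_of_dfsState_eq hs]
    exact ⟨hadj, hw⟩

lemma dfsState_eq_of_newNbrs_eq
    (h : ∀ i, dfsState G i = dfsState H i → newNbrs G i = newNbrs H i) :
    ∀ i, dfsState G i = dfsState H i
  | 0 => rfl
  | i + 1 => by
    have hs := dfsState_eq_of_newNbrs_eq h i
    have hstack := stackAt_eq_of_dfsState_eq hs
    rcases hsG : stackAt G i with _ | ⟨v, rest⟩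
    · rw [dfsState_succ_of_nil hsG, dfsState_succ_of_nil (hstack ▸ hsG), hs]
    · rw [dfsState_succ_of_cons hsG, dfsState_succ_of_cons (hstack ▸ hsG), h i hs,
        show exploredAt G i = exploredAt H i from congrArg Prod.snd hs]

lemma dfTree_eq_of_newNbrs_eq
    (h : ∀ i, dfsState G i = dfsState H i → newNbrs G i = newNbrs H i) :
    dfTree G = dfTree H := by
  have hs := dfsState_eq_of_newNbrs_eq h
  simp only [dfTree, fun i => stackAt_eq_of_dfsState_eq (hs i), fun i => h i (hs i)]

lemma notMem_stackAt_of_notMem_seenAt (h : stackAt G i = v :: rest) (hw : w ∉ seenAt G i)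
    (hv : v ∈ stackAt G j) : w ∉ stackAt G j := by
  intro hwj
  rcases le_or_gt j i with hji | hij
  · exact hw (seenAt_mono G hji (mem_seenAt.2 (Or.inr hwj)))
  · exact notMem_exploredAt_of_mem_stackAt hv (mem_exploredAt_of_head (by simp [h]) hij)

lemma exists_mem_stackAt_of_not_dfTree_adj (hG : G.Connected) (hadj : G.Adj u v)
    (hnt : ¬ (dfTree G).Adj u v) : ∃ i < n, u ∈ stackAt G i ∧ v ∈ stackAt G i := by
  obtain ⟨iu, hiu, hu⟩ := exists_stackAt_head_eq hG u
  obtain ⟨iv, hiv, hv⟩ := exists_stackAt_head_eq hG v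
  wlog hlt : iu < iv generalizing u v iu iv
  · have hne : iu ≠ iv := by
      rintro rfl
      exact hadj.ne (Option.some.inj (hu.symm.trans hv))
    obtain ⟨i, hi, hvi, hui⟩ := this hadj.symm (fun h => hnt h.symm) iv hiv hv iu hiu hu
      (lt_of_le_of_ne (not_lt.1 hlt) hne.symm)
    exact ⟨i, hi, hui, hvi⟩
  obtain ⟨rest, hs⟩ := List.head?_eq_some_iff.1 hu
  refine ⟨iu, hiu, List.mem_of_mem_head? hu, by_contra fun hvs => hnt ?_⟩
  refine dfTree_adj_of_mem_newNbrs hs ((mem_newNbrs_iff hs).2 ⟨hadj, ?_⟩)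
  rw [mem_seenAt, not_or]
  exact ⟨notMem_exploredAt_of_head hv hlt.le, hvs⟩

lemma adj_of_mem_newNbrs_of_permitted {T : SimpleGraph (Fin n)}
    (hperm : ∀ e ∈ G.edgeSet, e ∉ T.edgeSet → e ∈ permittedSet T)
    (hs : dfsState G i = dfsState T i) (h : stackAt G i = v :: rest) (hw : w ∈ newNbrs G i) :
    T.Adj v w := by
  obtain ⟨hadj, hwG⟩ := (mem_newNbrs_iff h).1 hw
  by_contra hnadj
  obtain ⟨a, b, hab, -, -, j, -, ha, hb⟩ := hperm s(v, w) hadj hnadj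
  rw [stackAt_eq_of_dfsState_eq hs] at h
  rw [seenAt_eq_of_dfsState_eq hs] at hwG
  rcases Sym2.eq_iff.1 hab with ⟨rfl, rfl⟩ | ⟨rfl, rfl⟩
  · exact notMem_stackAt_of_notMem_seenAt h hwG ha hb
  · exact notMem_stackAt_of_notMem_seenAt h hwG hb ha

end RandomGraphs

open RandomGraphs in
theorem dfTree_eq_iff_general (n : ℕ) (T G : SimpleGraph (Fin n))
    (hT : T.IsTree) :
    dfTree G = T ↔
      (T ≤ G ∧ ∀ e ∈ G.edgeSet, e ∉ T.edgeSet → e ∈ permittedSet T) := by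
  constructor
  · intro hd
    have hle : T ≤ G := hd ▸ dfTree_le G
    have hrun := dfsState_eq_of_newNbrs_eq fun i hs =>
      newNbrs_eq_of_le hle hs fun hv hw => hd ▸ dfTree_adj_of_mem_newNbrs hv hw
    refine ⟨hle, Sym2.ind fun u v hadj hnadj => ?_⟩
    obtain ⟨i, hi, hu, hv⟩ :=
      exists_mem_stackAt_of_not_dfTree_adj (hT.connected.mono hle) hadj (hd ▸ hnadj)
    rw [stackAt_eq_of_dfsState_eq (hrun i)] at hu hv
    exact ⟨u, v, rfl, G.ne_of_adj hadj, hnadj, i, hi, hu, hv⟩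
  · rintro ⟨hle, hperm⟩
    rw [dfTree_eq_of_newNbrs_eq fun i hs =>
      newNbrs_eq_of_le hle hs (adj_of_mem_newNbrs_of_permitted hperm hs), dfTree_eq_self hT]

open RandomGraphs in
/-- For a tree `T` and a connected graph `G` on `[n]`, the
depth-first tree `T(G)` produced by ordered DFS on `G` equals `T` if and only
if `G` is obtained from `T` by adding some subset of the edges permitted by
the ordered DFS of `T`. -/
theorem dfTree_eq_iff (n : ℕ) (T G : SimpleGraph (Fin n))
    (hT : T.IsTree) (hG : G.Connected) :
    dfTree G = T ↔
      (T ≤ G ∧ ∀ e ∈ G.edgeSet, e ∉ T.edgeSet → e ∈ permittedSet T) :=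
  dfTree_eq_iff_general n T G hT
end
end

section
/- Let G̃ be the random connected graph on [m] obtained by choosing a tree T̃ with probability proportional to (1-p)^{-a(T)} and adding each of the a(T̃) permitted edges independently with probability p. Then conditional on the surplus s(G̃) = k ≥ 0, G̃ is uniformly distributed on the set of connected graphs on [m] with m+k-1 edges, for every p ∈ (0,1). -/
open scoped Classical
noncomputable section

namespace RandomGraphs

variable {n : ℕ}

/-- The surplus `s(G) = |E(G)| - (n-1)` of a graph on `[n]`. -/
def surplus (G : SimpleGraph (Fin n)) : ℤ :=
  (G.edgeSet.ncard : ℤ) - ((n : ℤ) - 1)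

/-- The (unnormalized) weight `(1-p)^{-a(T)}` of the tilted tree distribution. -/
def treeWeight (p : ℝ) (T : SimpleGraph (Fin n)) : ℝ :=
  (1 - p) ^ (-(area T : ℤ))

/-- The probability that the two-stage procedure (pick a tree `T̃` with
probability proportional to `(1-p)^{-a(T)}`, then add each of the `a(T̃)`
permitted edges independently with probability `p`) produces the connected
graph `G`: the tree it must pick is `T(G)`, and then it must add exactly the
`s(G)` surplus edges of `G` among the `a(T(G))` permitted ones. -/
def twoStageProb (p : ℝ) (G : SimpleGraph (Fin n)) : ℝ :=
  (treeWeight p (dfTree G) /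
      ∑ T ∈ Finset.univ.filter (fun T : SimpleGraph (Fin n) => T.IsTree),
        treeWeight p T) *
    p ^ surplus G * (1 - p) ^ ((area (dfTree G) : ℤ) - surplus G)

end RandomGraphs

open RandomGraphs in
/-- Let `G̃` be the random connected graph on `[m]` obtained
by choosing a tree `T̃` with probability proportional to `(1-p)^{-a(T)}` and
adding each of the `a(T̃)` permitted edges independently with probability `p`.
Conditional on the surplus `s(G̃) = k`, the graph `G̃` is uniform on the set
of connected graphs on `[m]` with `m + k - 1` edges: any two such graphs are
produced with the same probability, for every `p ∈ (0,1)`. -/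
theorem twoStage_conditionally_uniform (m : ℕ) (hm : 1 ≤ m)
    (p : ℝ) (hp0 : 0 < p) (hp1 : p < 1) (k : ℕ)
    (G₁ G₂ : SimpleGraph (Fin m)) (hG₁ : G₁.Connected) (hG₂ : G₂.Connected)
    (he₁ : G₁.edgeSet.ncard = m + k - 1) (he₂ : G₂.edgeSet.ncard = m + k - 1) :
    twoStageProb p G₁ = twoStageProb p G₂ := by
  have hne : (1 - p) ≠ 0 := by linarith
  have hs : surplus G₁ = surplus G₂ := by
    unfold surplus; rw [he₁, he₂]
  have key : ∀ (a : ℤ) (s : ℤ) (S : ℝ),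
      ((1 - p) ^ (-a) / S) * p ^ s * (1 - p) ^ (a - s)
        = p ^ s * (1 - p) ^ (-s) / S := by
    intro a s S
    rw [div_mul_eq_mul_div, div_mul_eq_mul_div]
    congr 1
    rw [zpow_sub₀ hne, zpow_neg, zpow_neg]
    field_simp
  unfold twoStageProb treeWeight
  rw [key, key, hs]
end
end

section
/- Let T be a tree on [n], run ordered DFS from the root, and let v_i be the i-th explored vertex and O_i the stack of open vertices at step i. Then every vertex of O_i other than v_i is at graph distance exactly 1 from the path in T from the root to v_i; equivalently, each vertex of O_i \ {v_i} is a child of an ancestor of v_i (including possibly of v_i itself) that has not yet been explored. -/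
/-!
In ordered DFS on a tree, the children of the explored vertex `v` are pushed on top of the
stack, and each of them has ancestor set `{v} ∪ anc v`; so along the stack the ancestor sets
decrease, and the ancestors of the top vertex are all explored. Hence a vertex `u` below the
top vertex `v` is unexplored, so it is not on the root path of `v`, while
`anc u ⊆ anc v`; the parent of `u` therefore lies on that path.
-/

open scoped Classical
noncomputable section

theorem List.take_one_finRange {n : ℕ} [NeZero n] : (List.finRange n).take 1 = [0] := by
  obtain ⟨m, rfl⟩ := Nat.exists_eq_succ_of_ne_zero (NeZero.ne n)
  simp [List.finRange_succ]

namespace SimpleGraph.IsTree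

variable {V : Type*} {G : SimpleGraph V} (hG : G.IsTree) (r : V)

def rootPath (v : V) : G.Path r v :=
  (hG.connected.preconnected r v).some.toPath

def ancestors (v : V) : Set V :=
  {w | w ∈ (hG.rootPath r v).1.support} \ {v}

variable {r}

theorem eq_rootPath {v : V} (p : G.Walk r v) (hp : p.IsPath) : p = hG.rootPath r v :=
  congrArg Subtype.val ((hG.isAcyclic.subsingleton_path r v).allEq ⟨p, hp⟩ _)

theorem mem_support_rootPath {v w : V} :
    w ∈ (hG.rootPath r v).1.support ↔ w = v ∨ w ∈ hG.ancestors r v := by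
  by_cases h : w = v
  · simp [h]
  · simp [ancestors, h]

theorem ancestors_root : hG.ancestors r r = ∅ := by
  simp [ancestors, Walk.nil_iff_support_eq.1 (Walk.isPath_iff_nil.1 (hG.rootPath r r).2)]

theorem ancestors_eq_insert_of_adj {u v : V} (h : G.Adj v u) (hu : u ∉ hG.ancestors r v) :
    hG.ancestors r u = insert v (hG.ancestors r v) := by
  have hu' : u ∉ (hG.rootPath r v).1.support := by
    simpa [mem_support_rootPath, h.ne'] using hu
  have hpath := hG.eq_rootPath _ ((hG.rootPath r v).2.concat hu' h)
  ext w
  rw [Set.mem_insert_iff, ← mem_support_rootPath, ancestors, ← hpath]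
  simp only [Walk.support_concat, Set.mem_sdiff, Set.mem_ofPred_eq, List.mem_append,
    List.mem_singleton, Set.mem_singleton_iff]
  grind

theorem exists_adj_of_ne_root {u : V} (hu : u ≠ r) : ∃ w ∈ hG.ancestors r u, G.Adj w u := by
  have hnil : ¬ (hG.rootPath r u).1.Nil := fun h => hu h.eq.symm
  have hadj := Walk.adj_penultimate hnil
  exact ⟨_, ⟨Walk.getVert_mem_support _ _, hadj.ne⟩, hadj⟩

end SimpleGraph.IsTree

namespace RandomGraphs

variable {n : ℕ} {T : SimpleGraph (Fin n)} (hT : T.IsTree) (r : Fin n)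

structure DfsInvariant_s18 (st : List (Fin n) × Finset (Fin n)) : Prop where
  nodup : st.1.Nodup
  not_mem_explored : ∀ u ∈ st.1, u ∉ st.2
  ancestors_antitone : st.1.Pairwise fun a b => hT.ancestors r b ⊆ hT.ancestors r a
  ancestors_head_subset : ∀ v ∈ st.1.head?, hT.ancestors r v ⊆ st.2

variable {hT r}

theorem dfsInvariant_root : DfsInvariant_s18 hT r ([r], ∅) where
  nodup := List.nodup_singleton r
  not_mem_explored := by simp
  ancestors_antitone := List.pairwise_singleton _ r
  ancestors_head_subset := by simp [hT.ancestors_root]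

theorem DfsInvariant_s18.dfsStep {st : List (Fin n) × Finset (Fin n)} (h : DfsInvariant_s18 hT r st) :
    DfsInvariant_s18 hT r (dfsStep T st) := by
  obtain ⟨_ | ⟨v, rest⟩, A⟩ := st
  · exact h
  obtain ⟨hnodup, hopen, hanti, hhead⟩ := h
  set L := ((T.neighborFinset v).filter fun w => w ∉ A ∧ w ∉ v :: rest).sort (· ≤ ·)
  have hL : ∀ c ∈ L, T.Adj v c ∧ c ∉ A ∧ c ∉ v :: rest := by simp [L]
  have hvA : hT.ancestors r v ⊆ A := hhead v rfl
  have hanc : ∀ c ∈ L, hT.ancestors r c = insert v (hT.ancestors r v) := fun c hc =>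
    hT.ancestors_eq_insert_of_adj (hL c hc).1 fun h => (hL c hc).2.1 (hvA h)
  have hrest : ∀ b ∈ rest, hT.ancestors r b ⊆ hT.ancestors r v :=
    (List.pairwise_cons.1 hanti).1
  have hsub : ∀ w ∈ L ++ rest, hT.ancestors r w ⊆ insert v (hT.ancestors r v) := by
    intro w hw
    rcases List.mem_append.1 hw with hw | hw
    · rw [hanc w hw]
    · exact (hrest w hw).trans (Set.subset_insert _ _)
  change DfsInvariant_s18 hT r (L ++ rest, insert v A)
  refine ⟨?_, ?_, ?_, ?_⟩
  · exact (Finset.sort_nodup _ _).append (List.nodup_cons.1 hnodup).2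
      fun c hc hc' => (hL c hc).2.2 (List.mem_cons_of_mem v hc')
  · simp only [List.mem_append, Finset.mem_insert, not_or]
    rintro u (hu | hu)
    · exact ⟨fun h => (hL u hu).2.2 (h ▸ List.mem_cons_self), (hL u hu).2.1⟩
    · exact ⟨fun h => (List.nodup_cons.1 hnodup).1 (h ▸ hu),
        hopen u (List.mem_cons_of_mem v hu)⟩
  · refine List.pairwise_append.2 ⟨?_, (List.pairwise_cons.1 hanti).2, ?_⟩
    · exact List.pairwise_of_forall_mem_list fun a ha b hb => by rw [hanc a ha, hanc b hb]
    · intro a ha b hb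
      rw [hanc a ha]
      exact hsub b (List.mem_append_right L hb)
  · intro w hw
    rw [Finset.coe_insert]
    exact (hsub w (List.mem_of_mem_head? hw)).trans (Set.insert_subset_insert hvA)

theorem dfsInvariant_dfsState [NeZero n] (hT : T.IsTree) (i : ℕ) :
    DfsInvariant_s18 hT 0 (dfsState T i) := by
  induction i with
  | zero => simpa [dfsState, List.take_one_finRange] using dfsInvariant_root
  | succ i ih => simpa only [dfsState, Function.iterate_succ_apply'] using ih.dfsStep

theorem DfsInvariant_s18.of_mem_tail {v u : Fin n} {rest : List (Fin n)} {A : Finset (Fin n)}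
    (h : DfsInvariant_s18 hT r (v :: rest, A)) (hu : u ∈ rest) :
    u ∉ A ∧ u ∉ (hT.rootPath r v).1.support ∧ hT.ancestors r u ⊆ hT.ancestors r v := by
  have huA : u ∉ A := h.not_mem_explored u (List.mem_cons_of_mem v hu)
  refine ⟨huA, ?_, (List.pairwise_cons.1 h.ancestors_antitone).1 u hu⟩
  rw [hT.mem_support_rootPath, not_or]
  exact ⟨fun huv => (List.nodup_cons.1 h.nodup).1 (huv ▸ hu),
    fun hanc => huA (h.ancestors_head_subset v rfl hanc)⟩

end RandomGraphs

open RandomGraphs in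
theorem stack_vertices_adjacent_to_root_path_general (n : ℕ) [NeZero n]
    (T : SimpleGraph (Fin n)) (hT : T.IsTree) (i : ℕ)
    (v : Fin n) (hv : (stackAt T i).head? = some v)
    (u : Fin n) (hu : u ∈ (stackAt T i).tail) :
    u ∉ (dfsState T i).2 ∧
      ∀ P : T.Walk 0 v, P.IsPath →
        u ∉ P.support ∧ ∃ w ∈ P.support, T.Adj w u := by
  obtain ⟨rest, hstack⟩ := List.head?_eq_some_iff.1 hv
  rw [hstack, List.tail_cons] at hu
  have hinv : DfsInvariant_s18 hT 0 (v :: rest, (dfsState T i).2) :=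
    hstack ▸ dfsInvariant_dfsState hT i
  obtain ⟨huA, hu_path, hanc⟩ := hinv.of_mem_tail hu
  refine ⟨huA, fun P hP => ?_⟩
  rw [hT.eq_rootPath P hP]
  have hu_root : u ≠ 0 := fun h => hu_path (h ▸ SimpleGraph.Walk.start_mem_support _)
  obtain ⟨w, hw, hwu⟩ := hT.exists_adj_of_ne_root hu_root
  exact ⟨hu_path, w, hT.mem_support_rootPath.2 (Or.inr (hanc hw)), hwu⟩

open RandomGraphs in
/-- Run ordered DFS on a tree `T` on `[n]` from the root
(vertex `1`, here `0 : Fin n`).  At any step `i`, every vertex `u` of the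
stack `O_i` other than the currently explored vertex `v_i` is unexplored and
lies at graph distance exactly `1` from the path from the root to `v_i`:
`u` is not on that path, but is adjacent to (i.e. is a child of) one of its
vertices (an ancestor of `v_i`, possibly `v_i` itself). -/
theorem stack_vertices_adjacent_to_root_path (n : ℕ) [NeZero n]
    (T : SimpleGraph (Fin n)) (hT : T.IsTree) (i : ℕ) (hi : i < n)
    (v : Fin n) (hv : (stackAt T i).head? = some v)
    (u : Fin n) (hu : u ∈ (stackAt T i).tail) :
    u ∉ (dfsState T i).2 ∧
      ∀ P : T.Walk 0 v, P.IsPath →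
        u ∉ P.support ∧ ∃ w ∈ P.support, T.Adj w u :=
  stack_vertices_adjacent_to_root_path_general n T hT i v hv u hu
end
end
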